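/- The Cantor-like encoding C⁺ is injective: if s, s' : ℕ → {0,1} and C⁺(s) = C⁺(s'), then s = s'. -/

import Mathlib

/-!
Writing `t` for the shifted sequence `k ↦ s (k + 1)`, the series satisfies
`Cp s = (2 s₀ + 1) / 4 - Cp t / 4`. For `s` with values in `[0, 1]` the crude bound `|Cp s| ≤ 1`
fed into this identity gives `0 ≤ Cp s ≤ 1`, and feeding that in once more gives
`s₀ / 2 ≤ Cp s ≤ s₀ / 2 + 1 / 4`. For bits these intervals are disjoint, so `Cp s` determines `s₀`,
hence `Cp t`, and induction recovers every digit.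
-/

/-- A real number is a bit: `0` or `1`. -/
def IsBit (x : ℝ) : Prop := x = 0 ∨ x = 1

/-- Cantor-like base-4 encoding of the right half-tape `s₀ s₁ s₂ …`. -/
noncomputable def Cp (s : ℕ → ℝ) : ℝ :=
  ∑' k : ℕ, (-1 : ℝ) ^ k * (2 * s k + 1) / 4 ^ (k + 1)

open Set

lemma IsBit.mem_Icc {x : ℝ} (hx : IsBit x) : x ∈ Icc (0 : ℝ) 1 := by
  rcases hx with rfl | rfl <;> norm_num

lemma hasSum_three_quarters_mul_geometric :
    HasSum (fun k : ℕ => 3 / 4 * (1 / 4 : ℝ) ^ k) 1 := by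
  have := (hasSum_geometric_of_lt_one (r := (1 / 4 : ℝ)) (by norm_num) (by norm_num)).mul_left
    (3 / 4)
  norm_num at this ⊢
  exact this

section UnitInterval

variable {s : ℕ → ℝ} (hs : ∀ k, s k ∈ Icc (0 : ℝ) 1)
include hs

lemma norm_Cp_term_le (k : ℕ) :
    ‖(-1 : ℝ) ^ k * (2 * s k + 1) / 4 ^ (k + 1)‖ ≤ 3 / 4 * (1 / 4) ^ k := by
  obtain ⟨h0, h1⟩ := hs k
  rw [norm_div, norm_mul, norm_pow, norm_neg, norm_one, one_pow, one_mul, Real.norm_of_nonneg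
    (by linarith), Real.norm_of_nonneg (by positivity), div_le_iff₀ (by positivity)]
  calc 2 * s k + 1 ≤ 3 := by linarith
    _ = 3 / 4 * (1 / 4) ^ k * 4 ^ (k + 1) := by
      rw [pow_succ, one_div_pow]; field_simp

lemma summable_Cp_term : Summable fun k => (-1 : ℝ) ^ k * (2 * s k + 1) / 4 ^ (k + 1) :=
  hasSum_three_quarters_mul_geometric.summable.of_norm_bounded (norm_Cp_term_le hs)

lemma abs_Cp_le_one : |Cp s| ≤ 1 :=
  tsum_of_norm_bounded hasSum_three_quarters_mul_geometric (norm_Cp_term_le hs)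

lemma Cp_eq_head_sub_tail : Cp s = (2 * s 0 + 1) / 4 - Cp (fun k => s (k + 1)) / 4 := by
  have hterm : ∀ k : ℕ, (-1 : ℝ) ^ (k + 1) * (2 * s (k + 1) + 1) / 4 ^ (k + 1 + 1) =
      -(1 / 4) * ((-1) ^ k * (2 * s (k + 1) + 1) / 4 ^ (k + 1)) := fun k => by ring
  unfold Cp
  rw [(summable_Cp_term hs).tsum_eq_zero_add]
  simp only [hterm, tsum_mul_left]
  ring

lemma Cp_mem_Icc_zero_one : Cp s ∈ Icc (0 : ℝ) 1 := by
  have htail := abs_le.mp (abs_Cp_le_one fun k => hs (k + 1))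
  have h0 := hs 0
  rw [Cp_eq_head_sub_tail hs]
  constructor <;> linarith [h0.1, h0.2, htail.1, htail.2]

lemma Cp_mem_Icc_head : Cp s ∈ Icc (s 0 / 2) (s 0 / 2 + 1 / 4) := by
  have htail := Cp_mem_Icc_zero_one fun k => hs (k + 1)
  rw [Cp_eq_head_sub_tail hs]
  constructor <;> linarith [htail.1, htail.2]

end UnitInterval

section Bits

variable {s s' : ℕ → ℝ} (hs : ∀ k, IsBit (s k)) (hs' : ∀ k, IsBit (s' k))
include hs hs'

lemma head_eq_of_Cp_eq (h : Cp s = Cp s') : s 0 = s' 0 := by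
  have hI := Cp_mem_Icc_head fun k => (hs k).mem_Icc
  have hI' := Cp_mem_Icc_head fun k => (hs' k).mem_Icc
  rw [h] at hI
  rcases hs 0 with h0 | h0 <;> rcases hs' 0 with h0' | h0' <;>
    simp only [h0, h0', mem_Icc] at hI hI' ⊢ <;> linarith

lemma Cp_tail_eq_of_Cp_eq (h : Cp s = Cp s') :
    Cp (fun k => s (k + 1)) = Cp (fun k => s' (k + 1)) := by
  have h0 := head_eq_of_Cp_eq hs hs' h
  rw [Cp_eq_head_sub_tail fun k => (hs k).mem_Icc,
    Cp_eq_head_sub_tail fun k => (hs' k).mem_Icc, h0] at h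
  linarith

end Bits

theorem Cp_injective (s s' : ℕ → ℝ) (hs : ∀ k, IsBit (s k)) (hs' : ∀ k, IsBit (s' k))
    (h : Cp s = Cp s') : s = s' := by
  funext n
  induction n generalizing s s' with
  | zero => exact head_eq_of_Cp_eq hs hs' h
  | succ n ih =>
    exact ih _ _ (fun k => hs (k + 1)) (fun k => hs' (k + 1)) (Cp_tail_eq_of_Cp_eq hs hs' h)
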